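/- Let R be a commutative ring of characteristic 2 and let A₁, A₂, B₁, B₂, C₁, C₂, D₁, D₂ be k×k circulant matrices over R. Define Ã = (A₁, A₂; A₂ᵀ, A₁ᵀ) and similarly B̃, C̃, D̃ (each 2k×2k), and let Ω = I₂ ⊗ CIR(Ã, B̃) + J₂ ⊗ CIR(C̃, D̃), an 8k×8k matrix, where CIR(X,Y) denotes the block circulant matrix (X, Y; Y, X), I₂ the 2×2 identity, and J₂ the 2×2 exchange matrix. Then Ω·Ωᵀ = I_{8k} if and only if: Σ over pairs of A₁A₁ᵀ+A₂A₂ᵀ+B₁B₁ᵀ+B₂B₂ᵀ+C₁C₁ᵀ+C₂C₂ᵀ+D₁D₁ᵀ+D₂D₂ᵀ = I_k, A₁B₁ᵀ+A₂B₂ᵀ+B₁A₁ᵀ+B₂A₂ᵀ+C₁D₁ᵀ+C₂D₂ᵀ+D₁C₁ᵀ+D₂C₂ᵀ = 0, A₁C₁ᵀ+A₂C₂ᵀ+B₁D₁ᵀ+B₂D₂ᵀ+C₁A₁ᵀ+C₂A₂ᵀ+D₁B₁ᵀ+D₂B₂ᵀ = 0, and A₁D₁ᵀ+A₂D₂ᵀ+B₁C₁ᵀ+B₂C₂ᵀ+C₁B₁ᵀ+C₂B₂ᵀ+D₁A₁ᵀ+D₂A₂ᵀ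 = 0. -/

import Mathlib

open Matrix

/-- The cyclic right-shift permutation matrix `P = (0, I_{n-1}; 1, 0)`. -/
def shiftP (n : ℕ) [NeZero n] (R : Type*) [CommRing R] : Matrix (Fin n) (Fin n) R :=
  Matrix.of fun i j => if j = i + 1 then (1 : R) else 0

/-- The circulant matrix `cir (b₀, …, b_{n-1})`, whose `(i, j)` entry is `b_{(j-i) mod n}`. -/
def cir {R : Type*} [CommRing R] {n : ℕ} (b : Fin n → R) : Matrix (Fin n) (Fin n) R :=
  Matrix.of fun i j => b (j - i)

open Kronecker

/-- The 2×2 exchange matrix `J₂`. -/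
def J2 (R : Type*) [CommRing R] : Matrix (Fin 2) (Fin 2) R := !![0, 1; 1, 0]

/-!
Writing `Ω = I₂ ⊗ P + J₂ ⊗ Q` with `P = CIR(Ã, B̃)`, `Q = CIR(C̃, D̃)`, the relation `J₂² = I₂` gives
`Ω Ωᵀ = I₂ ⊗ (P Pᵀ + Q Qᵀ) + J₂ ⊗ (P Qᵀ + Q Pᵀ)`, and products `CIR(X, Y) CIR(Z, W)ᵀ` are again block
circulant, so `Ω Ωᵀ = I` becomes four identities between `Ã, B̃, C̃, D̃`. Since circulant matrices
commute with each other and with their transposes, `X̃ Ỹᵀ = (M, N; Nᵀ, Mᵀ)` keeps the shape of `X̃`,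
and in `X̃ X̃ᵀ` and in `X̃ Ỹᵀ + Ỹ X̃ᵀ` the off-diagonal block `N` appears twice, so it vanishes in
characteristic 2 and only the diagonal blocks, the four stated sums, remain.
-/

theorem Commute.transpose {n α : Type*} [Fintype n] [CommSemiring α] {A B : Matrix n n α}
    (h : Commute A B) : Commute Aᵀ Bᵀ := by
  rw [commute_iff_eq, ← transpose_mul, ← transpose_mul, h.eq]

theorem Matrix.add_self_eq_zero_of_charTwo {m n α : Type*} [Semiring α] [CharP α 2]
    (M : Matrix m n α) : M + M = 0 := by
  ext i j
  exact CharTwo.add_self_eq_zero _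

section Kronecker

variable {R : Type*} [CommRing R]

theorem J2_transpose : (J2 R)ᵀ = J2 R := by
  ext i j
  fin_cases i <;> fin_cases j <;> rfl

theorem J2_mul_self : J2 R * J2 R = 1 := by
  ext i j
  fin_cases i <;> fin_cases j <;> simp [J2]

variable {m : Type*} [DecidableEq m]

theorem one_kronecker_add_J2_kronecker_mul_transpose [Fintype m] (P Q : Matrix m m R) :
    ((1 : Matrix (Fin 2) (Fin 2) R) ⊗ₖ P + J2 R ⊗ₖ Q) * (1 ⊗ₖ P + J2 R ⊗ₖ Q)ᵀ =
      1 ⊗ₖ (P * Pᵀ + Q * Qᵀ) + J2 R ⊗ₖ (P * Qᵀ + Q * Pᵀ) := by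
  simp only [transpose_add, ← kroneckerMap_transpose, transpose_one, J2_transpose, add_mul,
    mul_add, ← mul_kronecker_mul, one_mul, mul_one, J2_mul_self, kronecker_add]
  abel

theorem one_kronecker_add_J2_kronecker_eq_one_iff (X Y : Matrix m m R) :
    (1 : Matrix (Fin 2) (Fin 2) R) ⊗ₖ X + J2 R ⊗ₖ Y = 1 ↔ X = 1 ∧ Y = 0 := by
  constructor
  · intro h
    refine ⟨ext fun a b => ?_, ext fun a b => ?_⟩
    · simpa [J2, one_apply] using congr_fun₂ h (0, a) (0, b)
    · simpa [J2, one_apply] using congr_fun₂ h (0, a) (1, b)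
  · rintro ⟨rfl, rfl⟩
    simp

end Kronecker

/- `blockCirculant` and `tildeMatrix` are reducible so that `rw` and `simp` find them inside the
nested `fromBlocks` of the statement. -/

section BlockCirculant

variable {m n α : Type*}

abbrev blockCirculant (X Y : Matrix m n α) : Matrix (m ⊕ m) (n ⊕ n) α :=
  fromBlocks X Y Y X

theorem blockCirculant_add [Add α] (X Y X' Y' : Matrix m n α) :
    blockCirculant X Y + blockCirculant X' Y' = blockCirculant (X + X') (Y + Y') :=
  fromBlocks_add _ _ _ _ _ _ _ _

theorem blockCirculant_eq_one_iff [Zero α] [One α] [DecidableEq m] (X Y : Matrix m m α) :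
    blockCirculant X Y = 1 ↔ X = 1 ∧ Y = 0 := by
  rw [← fromBlocks_one, fromBlocks_inj]
  tauto

theorem blockCirculant_eq_zero_iff [Zero α] (X Y : Matrix m n α) :
    blockCirculant X Y = 0 ↔ X = 0 ∧ Y = 0 := by
  rw [← fromBlocks_zero, fromBlocks_inj]
  tauto

variable [Fintype n] [Semiring α]

theorem blockCirculant_mul_transpose {l : Type*} (X Y : Matrix m n α) (Z W : Matrix l n α) :
    blockCirculant X Y * (blockCirculant Z W)ᵀ =
      blockCirculant (X * Zᵀ + Y * Wᵀ) (X * Wᵀ + Y * Zᵀ) := by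
  simp only [fromBlocks_transpose, fromBlocks_multiply]
  rw [add_comm (Y * Zᵀ), add_comm (Y * Wᵀ)]

theorem blockCirculant_mul_transpose_add_swap (X Y Z W : Matrix m n α) :
    blockCirculant X Y * (blockCirculant Z W)ᵀ + blockCirculant Z W * (blockCirculant X Y)ᵀ =
      blockCirculant (X * Zᵀ + Z * Xᵀ + (Y * Wᵀ + W * Yᵀ))
        (X * Wᵀ + W * Xᵀ + (Y * Zᵀ + Z * Yᵀ)) := by
  rw [blockCirculant_mul_transpose, blockCirculant_mul_transpose, blockCirculant_add]
  congr 1 <;> abel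

end BlockCirculant

section TildeMatrix

variable {n α : Type*}

abbrev tildeMatrix (X₁ X₂ : Matrix n n α) : Matrix (n ⊕ n) (n ⊕ n) α :=
  fromBlocks X₁ X₂ X₂ᵀ X₁ᵀ

theorem tildeMatrix_add [Add α] (X₁ X₂ Y₁ Y₂ : Matrix n n α) :
    tildeMatrix X₁ X₂ + tildeMatrix Y₁ Y₂ = tildeMatrix (X₁ + Y₁) (X₂ + Y₂) := by
  simp only [tildeMatrix, fromBlocks_add, transpose_add]

theorem tildeMatrix_eq_one_iff [Zero α] [One α] [DecidableEq n] (X₁ X₂ : Matrix n n α) :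
    tildeMatrix X₁ X₂ = 1 ↔ X₁ = 1 ∧ X₂ = 0 := by
  rw [← fromBlocks_one, fromBlocks_inj, transpose_eq_zero, transpose_eq_one]
  tauto

theorem tildeMatrix_eq_zero_iff [Zero α] (X₁ X₂ : Matrix n n α) :
    tildeMatrix X₁ X₂ = 0 ↔ X₁ = 0 ∧ X₂ = 0 := by
  rw [← fromBlocks_zero, fromBlocks_inj, transpose_eq_zero, transpose_eq_zero]
  tauto

variable [Fintype n] [CommSemiring α] {X₁ X₂ Y₁ Y₂ : Matrix n n α}

theorem tildeMatrix_mul_transpose (h₁₂ : Commute X₁ Y₂) (h₂₁ : Commute X₂ Y₁)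
    (h₁ : Commute X₁ᵀ Y₁) (h₂ : Commute X₂ᵀ Y₂) :
    tildeMatrix X₁ X₂ * (tildeMatrix Y₁ Y₂)ᵀ =
      tildeMatrix (X₁ * Y₁ᵀ + X₂ * Y₂ᵀ) (X₁ * Y₂ + X₂ * Y₁) := by
  simp only [tildeMatrix, fromBlocks_transpose, transpose_transpose, fromBlocks_multiply,
    transpose_add, transpose_mul, h₁.eq, h₂.eq, h₁₂.transpose.eq, h₂₁.transpose.eq]
  rw [add_comm (Y₂ᵀ * X₁ᵀ), add_comm (Y₂ * X₂ᵀ)]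

variable [CharP α 2]

theorem tildeMatrix_mul_transpose_self (h : Commute X₁ X₂) (h₁ : Commute X₁ᵀ X₁)
    (h₂ : Commute X₂ᵀ X₂) :
    tildeMatrix X₁ X₂ * (tildeMatrix X₁ X₂)ᵀ = tildeMatrix (X₁ * X₁ᵀ + X₂ * X₂ᵀ) 0 := by
  rw [tildeMatrix_mul_transpose h h.symm h₁ h₂, ← h.eq, add_self_eq_zero_of_charTwo]

theorem tildeMatrix_mul_transpose_add_swap (h₁₂ : Commute X₁ Y₂) (h₂₁ : Commute X₂ Y₁)
    (h₁ : Commute X₁ᵀ Y₁) (h₂ : Commute X₂ᵀ Y₂) :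
    tildeMatrix X₁ X₂ * (tildeMatrix Y₁ Y₂)ᵀ + tildeMatrix Y₁ Y₂ * (tildeMatrix X₁ X₂)ᵀ =
      tildeMatrix (X₁ * Y₁ᵀ + X₂ * Y₂ᵀ + (Y₁ * X₁ᵀ + Y₂ * X₂ᵀ)) 0 := by
  have h₁' : Commute Y₁ᵀ X₁ := by simpa using h₁.transpose.symm
  have h₂' : Commute Y₂ᵀ X₂ := by simpa using h₂.transpose.symm
  rw [tildeMatrix_mul_transpose h₁₂ h₂₁ h₁ h₂, tildeMatrix_mul_transpose h₂₁.symm h₁₂.symm h₁' h₂',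
    tildeMatrix_add, h₁₂.eq, h₂₁.eq, add_comm (Y₁ * X₂), add_self_eq_zero_of_charTwo]

end TildeMatrix

section Circulant

variable {R : Type*} [CommRing R] {n : ℕ}

theorem cir_eq_circulant (b : Fin n → R) : cir b = circulant fun i => b (-i) := by
  ext i j
  have : NeZero n := NeZero.of_pos i.pos
  simp only [cir, circulant_apply, of_apply, neg_sub]

theorem cir_transpose (b : Fin n → R) : (cir b)ᵀ = cir fun i => b (-i) := by
  ext i j
  have : NeZero n := NeZero.of_pos i.pos
  simp only [cir, transpose_apply, of_apply, neg_sub]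

theorem commute_cir (a b : Fin n → R) : Commute (cir a) (cir b) := by
  rw [cir_eq_circulant, cir_eq_circulant]
  exact Fin.circulant_mul_comm _ _

theorem commute_cir_transpose_cir (a b : Fin n → R) : Commute (cir a)ᵀ (cir b) := by
  rw [cir_transpose]
  exact commute_cir _ _

end Circulant

/-- For `k×k` circulant matrices `A₁, A₂, B₁, B₂, C₁, C₂, D₁, D₂` over a commutative ring of
characteristic 2, with `Ã = (A₁ A₂; A₂ᵀ A₁ᵀ)` (similarly `B̃, C̃, D̃`) and
`Ω = I₂ ⊗ CIR(Ã, B̃) + J₂ ⊗ CIR(C̃, D̃)`, we have `Ω Ωᵀ = I` iff the four stated conditions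
hold. -/
theorem omega_kronecker_selfdual_iff {R : Type*} [CommRing R] [CharP R 2] {k : ℕ}
    (A₁ A₂ B₁ B₂ C₁ C₂ D₁ D₂ : Matrix (Fin k) (Fin k) R)
    (hA₁ : ∃ a, A₁ = cir a) (hA₂ : ∃ a, A₂ = cir a) (hB₁ : ∃ b, B₁ = cir b)
    (hB₂ : ∃ b, B₂ = cir b) (hC₁ : ∃ c, C₁ = cir c) (hC₂ : ∃ c, C₂ = cir c)
    (hD₁ : ∃ d, D₁ = cir d) (hD₂ : ∃ d, D₂ = cir d) :
    ((1 : Matrix (Fin 2) (Fin 2) R) ⊗ₖ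
        (Matrix.fromBlocks (Matrix.fromBlocks A₁ A₂ A₂ᵀ A₁ᵀ) (Matrix.fromBlocks B₁ B₂ B₂ᵀ B₁ᵀ)
          (Matrix.fromBlocks B₁ B₂ B₂ᵀ B₁ᵀ) (Matrix.fromBlocks A₁ A₂ A₂ᵀ A₁ᵀ)) +
      (J2 R) ⊗ₖ
        (Matrix.fromBlocks (Matrix.fromBlocks C₁ C₂ C₂ᵀ C₁ᵀ) (Matrix.fromBlocks D₁ D₂ D₂ᵀ D₁ᵀ)
          (Matrix.fromBlocks D₁ D₂ D₂ᵀ D₁ᵀ) (Matrix.fromBlocks C₁ C₂ C₂ᵀ C₁ᵀ))) *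
      ((1 : Matrix (Fin 2) (Fin 2) R) ⊗ₖ
        (Matrix.fromBlocks (Matrix.fromBlocks A₁ A₂ A₂ᵀ A₁ᵀ) (Matrix.fromBlocks B₁ B₂ B₂ᵀ B₁ᵀ)
          (Matrix.fromBlocks B₁ B₂ B₂ᵀ B₁ᵀ) (Matrix.fromBlocks A₁ A₂ A₂ᵀ A₁ᵀ)) +
      (J2 R) ⊗ₖ
        (Matrix.fromBlocks (Matrix.fromBlocks C₁ C₂ C₂ᵀ C₁ᵀ) (Matrix.fromBlocks D₁ D₂ D₂ᵀ D₁ᵀ)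
          (Matrix.fromBlocks D₁ D₂ D₂ᵀ D₁ᵀ) (Matrix.fromBlocks C₁ C₂ C₂ᵀ C₁ᵀ)))ᵀ = 1 ↔
    (A₁ * A₁ᵀ + A₂ * A₂ᵀ + B₁ * B₁ᵀ + B₂ * B₂ᵀ + C₁ * C₁ᵀ + C₂ * C₂ᵀ + D₁ * D₁ᵀ + D₂ * D₂ᵀ = 1 ∧
     A₁ * B₁ᵀ + A₂ * B₂ᵀ + B₁ * A₁ᵀ + B₂ * A₂ᵀ + C₁ * D₁ᵀ + C₂ * D₂ᵀ + D₁ * C₁ᵀ + D₂ * C₂ᵀ = 0 ∧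
     A₁ * C₁ᵀ + A₂ * C₂ᵀ + B₁ * D₁ᵀ + B₂ * D₂ᵀ + C₁ * A₁ᵀ + C₂ * A₂ᵀ + D₁ * B₁ᵀ + D₂ * B₂ᵀ = 0 ∧
     A₁ * D₁ᵀ + A₂ * D₂ᵀ + B₁ * C₁ᵀ + B₂ * C₂ᵀ + C₁ * B₁ᵀ + C₂ * B₂ᵀ + D₁ * A₁ᵀ + D₂ * A₂ᵀ = 0) := by
  obtain ⟨a₁, rfl⟩ := hA₁
  obtain ⟨a₂, rfl⟩ := hA₂
  obtain ⟨b₁, rfl⟩ := hB₁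
  obtain ⟨b₂, rfl⟩ := hB₂
  obtain ⟨c₁, rfl⟩ := hC₁
  obtain ⟨c₂, rfl⟩ := hC₂
  obtain ⟨d₁, rfl⟩ := hD₁
  obtain ⟨d₂, rfl⟩ := hD₂
  rw [one_kronecker_add_J2_kronecker_mul_transpose, one_kronecker_add_J2_kronecker_eq_one_iff,
    blockCirculant_mul_transpose, blockCirculant_mul_transpose, blockCirculant_add,
    blockCirculant_mul_transpose_add_swap, blockCirculant_eq_one_iff, blockCirculant_eq_zero_iff]
  simp only [tildeMatrix_mul_transpose_self, tildeMatrix_mul_transpose_add_swap, tildeMatrix_add,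
    add_zero, tildeMatrix_eq_one_iff, tildeMatrix_eq_zero_iff, and_true, commute_cir,
    commute_cir_transpose_cir]
  rw [and_assoc]
  abel_nf
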